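/- For every u ∈ ℂ, with the block operators L = [[1, uτJ − τ],[0, 1 − uJ]] and M = [[1, τ],[uσ, 1 + uJ]] on C₀ ⊕ C₁, one has M·L = [[1, 0],[uσ, (1 − uT)(1 − uJ)]]. -/

import Mathlib

/- Formalization of a statement from "Ihara Zeta functions of infinite weighted graphs"
   (A. Deitmar).  Context: `X` is a connected graph of bounded valency, `w` is a positive
   weight function on oriented edges (darts) with finite total weight. -/

open scoped BigOperators
open SimpleGraph

attribute [local instance 10] Classical.propDecidable
noncomputable local instance (priority := 10) {α : Type*} : DecidableEq α := Classical.decEq _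

variable {V : Type*}

/-- The standard basis vector of `ℓ²(ι)` at `i`. -/
noncomputable def bv {ι : Type*} (i : ι) : lp (fun _ : ι => ℂ) 2 := lp.single 2 i 1

/-- Assembles a `2 × 2` block of operators into an operator on the direct sum. -/
noncomputable def blk {H₀ H₁ : Type*} [NormedAddCommGroup H₀] [NormedSpace ℂ H₀]
    [NormedAddCommGroup H₁] [NormedSpace ℂ H₁]
    (P : H₀ →L[ℂ] H₀) (Q : H₁ →L[ℂ] H₀) (R : H₀ →L[ℂ] H₁) (S : H₁ →L[ℂ] H₁) :
    (H₀ × H₁) →L[ℂ] (H₀ × H₁) :=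
  (P.coprod Q).prod (R.coprod S)

/-! `στ` sends a dart `e` to the weighted sum of all darts leaving `t(e)`; among them, `e⁻¹` is
exactly the one that `T` omits and `J` supplies, so `στ = T + J`. The rest is `2 × 2` block
multiplication: the lower right entry is `u²στJ − uστ + 1 − u²J² = (1 − uT)(1 − uJ)`. -/

lemma bv_apply {ι : Type*} (i j : ι) :
    (bv i : lp (fun _ : ι => ℂ) 2) j = if j = i then 1 else 0 := by
  simp [bv, lp.single_apply, Pi.single_apply]

lemma ext_bv {ι H : Type*} [NormedAddCommGroup H] [NormedSpace ℂ H]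
    {A B : lp (fun _ : ι => ℂ) 2 →L[ℂ] H} (h : ∀ i, A (bv i) = B (bv i)) : A = B :=
  lp.ext_continuousLinearMap ENNReal.ofNat_ne_top fun i => ContinuousLinearMap.ext_ring (h i)

section Blocks

variable {H₀ H₁ : Type*} [NormedAddCommGroup H₀] [NormedSpace ℂ H₀]
    [NormedAddCommGroup H₁] [NormedSpace ℂ H₁]

lemma blk_comp_blk (P P' : H₀ →L[ℂ] H₀) (Q Q' : H₁ →L[ℂ] H₀) (R R' : H₀ →L[ℂ] H₁)
    (S S' : H₁ →L[ℂ] H₁) :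
    (blk P Q R S).comp (blk P' Q' R' S') =
      blk (P.comp P' + Q.comp R') (P.comp Q' + Q.comp S')
        (R.comp P' + S.comp R') (R.comp Q' + S.comp S') := by
  ext x <;> simp [blk]

lemma blk_comp_blk_eq_of_comp_eq_add {σ : H₀ →L[ℂ] H₁} {τ : H₁ →L[ℂ] H₀} {T J : H₁ →L[ℂ] H₁}
    (hστ : σ.comp τ = T + J) (u : ℂ) :
    (blk 1 τ (u • σ) (1 + u • J)).comp (blk 1 (u • (τ.comp J) - τ) 0 (1 - u • J))
      = blk 1 0 (u • σ) ((1 - u • T).comp (1 - u • J)) := by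
  rw [blk_comp_blk]
  congr 1
  · ext x; simp
  · ext y; simp
  · ext x; simp
  · have hστ' (v : H₁) : σ (τ v) = T v + J v := congr($hστ v)
    ext y
    simp only [ContinuousLinearMap.comp_sub, ContinuousLinearMap.comp_smulₛₗ, RingHom.id_apply,
      ContinuousLinearMap.smul_comp, ContinuousLinearMap.add_comp, ContinuousLinearMap.sub_comp,
      ContinuousLinearMap.comp_apply, smul_add, add_apply, sub_apply, smul_apply,
      one_apply_eq_self, hστ']
    module

end Blocks

lemma sigma_comp_tau_eq_T_add_J {G : SimpleGraph V} {w : G.Dart → ℝ}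
    {T J : lp (fun _ : G.Dart => ℂ) 2 →L[ℂ] lp (fun _ : G.Dart => ℂ) 2}
    {σ : lp (fun _ : V => ℂ) 2 →L[ℂ] lp (fun _ : G.Dart => ℂ) 2}
    {τ : lp (fun _ : G.Dart => ℂ) 2 →L[ℂ] lp (fun _ : V => ℂ) 2}
    (hT : ∀ e e' : G.Dart, T (bv e) e'
      = if e'.toProd.1 = e.toProd.2 ∧ e' ≠ e.symm then (w e' : ℂ) else 0)
    (hσ : ∀ (x : V) (e : G.Dart), σ (bv x) e = if e.toProd.1 = x then (w e : ℂ) else 0)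
    (hJ : ∀ e e' : G.Dart, J (bv e) e' = if e' = e.symm then (w e.symm : ℂ) else 0)
    (hτ : ∀ (e : G.Dart) (y : V), τ (bv e) y = if y = e.toProd.2 then 1 else 0) :
    σ.comp τ = T + J := by
  refine ext_bv fun e => lp.ext <| funext fun e' => ?_
  have hτe : τ (bv e) = bv e.toProd.2 := lp.ext <| funext fun y => by rw [hτ, bv_apply]
  rw [ContinuousLinearMap.comp_apply, hτe, hσ]
  rcases eq_or_ne e' e.symm with rfl | h
  · simp [hT, hJ]
  · simp [hT, hJ, h]

theorem statement_17_general (G : SimpleGraph V)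
    (w : G.Dart → ℝ)
    (T : lp (fun _ : G.Dart => ℂ) 2 →L[ℂ] lp (fun _ : G.Dart => ℂ) 2)
    (hT : ∀ e e' : G.Dart, T (bv e) e'
      = if e'.toProd.1 = e.toProd.2 ∧ e' ≠ e.symm then (w e' : ℂ) else 0)
    (σ : lp (fun _ : V => ℂ) 2 →L[ℂ] lp (fun _ : G.Dart => ℂ) 2)
    (hσ : ∀ (x : V) (e : G.Dart), σ (bv x) e = if e.toProd.1 = x then (w e : ℂ) else 0)
    (J : lp (fun _ : G.Dart => ℂ) 2 →L[ℂ] lp (fun _ : G.Dart => ℂ) 2)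
    (hJ : ∀ e e' : G.Dart, J (bv e) e' = if e' = e.symm then (w e.symm : ℂ) else 0)
    (τ : lp (fun _ : G.Dart => ℂ) 2 →L[ℂ] lp (fun _ : V => ℂ) 2)
    (hτ : ∀ (e : G.Dart) (y : V), τ (bv e) y = if y = e.toProd.2 then 1 else 0) :
    ∀ u : ℂ,
      (blk 1 τ (u • σ) (1 + u • J)).comp
          (blk 1 (u • (τ.comp J) - τ) 0 (1 - u • J))
        = blk 1 0 (u • σ) ((1 - u • T).comp (1 - u • J)) :=
  blk_comp_blk_eq_of_comp_eq_add (sigma_comp_tau_eq_T_add_J hT hσ hJ hτ)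

/-- With `L = [[1, uτJ − τ],[0, 1 − uJ]]` and `M = [[1, τ],[uσ, 1 + uJ]]`
one has `M·L = [[1, 0],[uσ, (1 − uT)(1 − uJ)]]`. -/
theorem statement_17 (G : SimpleGraph V) (hconn : G.Connected)
    (M : ℝ) (hM : 0 < M)
    (hval : ∀ x : V, (G.neighborSet x).Finite ∧ ((G.neighborSet x).ncard : ℝ) ≤ M)
    (w : G.Dart → ℝ) (hw : ∀ e, 0 < w e) (hsum : Summable w)
    (T : lp (fun _ : G.Dart => ℂ) 2 →L[ℂ] lp (fun _ : G.Dart => ℂ) 2)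
    (hT : ∀ e e' : G.Dart, T (bv e) e'
      = if e'.toProd.1 = e.toProd.2 ∧ e' ≠ e.symm then (w e' : ℂ) else 0)
    (σ : lp (fun _ : V => ℂ) 2 →L[ℂ] lp (fun _ : G.Dart => ℂ) 2)
    (hσ : ∀ (x : V) (e : G.Dart), σ (bv x) e = if e.toProd.1 = x then (w e : ℂ) else 0)
    (J : lp (fun _ : G.Dart => ℂ) 2 →L[ℂ] lp (fun _ : G.Dart => ℂ) 2)
    (hJ : ∀ e e' : G.Dart, J (bv e) e' = if e' = e.symm then (w e.symm : ℂ) else 0)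
    (τ : lp (fun _ : G.Dart => ℂ) 2 →L[ℂ] lp (fun _ : V => ℂ) 2)
    (hτ : ∀ (e : G.Dart) (y : V), τ (bv e) y = if y = e.toProd.2 then 1 else 0) :
    ∀ u : ℂ,
      (blk 1 τ (u • σ) (1 + u • J)).comp
          (blk 1 (u • (τ.comp J) - τ) 0 (1 - u • J))
        = blk 1 0 (u • σ) ((1 - u • T).comp (1 - u • J)) :=
  statement_17_general G w T hT σ hσ J hJ τ hτ
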